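/- Let W₁, W₂ be finitely generated R-submodules of the divided power module 𝒟 = K_{DP}[X₁,…,X_m] (equipped with the contraction action of R). Then ann_R(W₁ ∩ W₂) = ann_R(W₁) + ann_R(W₂). -/
import Mathlib


open MvPolynomial
open scoped Classical

noncomputable section

variable {m : ℕ} {K : Type*} [Field K]

/-- The divided power module `𝒟 = K_DP[X₁,…,X_m]`, realized as finitely supported
coefficient functions on monomials in the dual variables. -/
abbrev DP (m : ℕ) (K : Type*) [Field K] : Type _ := (Fin m →₀ ℕ) →₀ K

/-- Contraction action of a polynomial on the divided power module:
`x^a ∘ X^b = X^(b-a)` if `a ≤ b` componentwise, and `0` otherwise. -/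
def contract (f : MvPolynomial (Fin m) K) (F : DP m K) : DP m K :=
  ∑ a ∈ f.support, F.sum fun b x =>
    if a ≤ b then Finsupp.single (b - a) (MvPolynomial.coeff a f * x) else 0

/-- Total degree of a monomial exponent. -/
def mdeg (b : Fin m →₀ ℕ) : ℕ := b.sum fun _ e => e

/-- Degree of an element of the divided power module. -/
def DPdeg (F : DP m K) : ℕ := F.support.sup mdeg

/-- Top degree form of an element of the divided power module. -/
def topForm (F : DP m K) : DP m K := F.filter fun b => mdeg b = DPdeg F

/-- A subset of `𝒟` which is an `R`-submodule under the contraction action. -/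
def IsDPSubmodule (W : Set (DP m K)) : Prop :=
  (0 : DP m K) ∈ W ∧ (∀ F G, F ∈ W → G ∈ W → F + G ∈ W) ∧
    (∀ (c : K), ∀ F, F ∈ W → c • F ∈ W) ∧
    (∀ (f : MvPolynomial (Fin m) K), ∀ F, F ∈ W → contract f F ∈ W)

/-- The `R`-submodule of `𝒟` generated by a set. -/
def DPspan (S : Set (DP m K)) : Set (DP m K) := ⋂₀ {W | IsDPSubmodule W ∧ S ⊆ W}

/-- The annihilator of a subset of `𝒟` in `R`. -/
def DPann (W : Set (DP m K)) : Set (MvPolynomial (Fin m) K) :=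
  {f | ∀ F ∈ W, contract f F = 0}

lemma contract_apply (f : MvPolynomial (Fin m) K) (F : DP m K)
    {A : Finset (Fin m →₀ ℕ)} (hA : f.support ⊆ A) (c : Fin m →₀ ℕ) :
    contract f F c = ∑ a ∈ A, coeff a f * F (a + c) := by
  have h1 : contract f F c = ∑ a ∈ f.support, coeff a f * F (a + c) := by
    rw [contract, Finsupp.finset_sum_apply]
    refine Finset.sum_congr rfl fun a _ => ?_
    rw [Finsupp.sum_apply, Finsupp.sum]
    have hpt : ∀ b ∈ F.support,
        (if a ≤ b then Finsupp.single (b - a) (coeff a f * F b) else 0) c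
          = if b = a + c then coeff a f * F b else 0 := by
      intro b _
      by_cases hab : a ≤ b
      · have hiff : (b - a = c) ↔ (b = a + c) := by
          rw [tsub_eq_iff_eq_add_of_le hab, add_comm]
        simp only [hab, if_true, Finsupp.single_apply, hiff]
      · have hne : b ≠ a + c := fun h => hab (by rw [h]; exact le_self_add)
        simp [hab, hne]
    rw [Finset.sum_congr rfl hpt, Finset.sum_ite_eq' F.support (a + c)]
    by_cases h : a + c ∈ F.support
    · simp [h]
    · simp [Finsupp.notMem_support_iff.mp h]
  rw [h1]
  exact Finset.sum_subset hA fun a _ ha => by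
    rw [MvPolynomial.notMem_support_iff.mp ha, zero_mul]

/-- The pairing `B f F = ∑ coeff a f * F a`. -/

def Bf (f : MvPolynomial (Fin m) K) (F : DP m K) : K := ∑ a ∈ f.support, coeff a f * F a

lemma Bf_eq_sum {f : MvPolynomial (Fin m) K} {A : Finset (Fin m →₀ ℕ)}
    (hA : f.support ⊆ A) (F : DP m K) :
    Bf f F = ∑ a ∈ A, coeff a f * F a := by
  rw [Bf]
  apply Finset.sum_subset hA
  intro a _ ha
  rw [MvPolynomial.notMem_support_iff.mp ha, zero_mul]

lemma Bf_eq_contract_zero (f : MvPolynomial (Fin m) K) (F : DP m K) :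
    Bf f F = contract f F 0 := by
  rw [contract_apply f F (subset_refl _) 0, Bf]
  simp

lemma contract_monomial_apply (c : Fin m →₀ ℕ) (F : DP m K) (a : Fin m →₀ ℕ) :
    contract (monomial c (1 : K)) F a = F (c + a) := by
  rw [contract_apply _ F (MvPolynomial.support_monomial_subset) a]
  simp [MvPolynomial.coeff_monomial]

lemma contract_apply_eq_Bf (f : MvPolynomial (Fin m) K) (F : DP m K) (c : Fin m →₀ ℕ) :
    contract f F c = Bf f (contract (monomial c 1) F) := by
  rw [contract_apply f F (subset_refl _) c, Bf]
  exact Finset.sum_congr rfl fun a _ => by rw [contract_monomial_apply, add_comm]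

lemma Bf_add (f g : MvPolynomial (Fin m) K) (F : DP m K) :
    Bf (f + g) F = Bf f F + Bf g F := by
  rw [Bf_eq_sum (A := f.support ∪ g.support ∪ (f + g).support) (by intro x hx; simp [hx]) F,
    Bf_eq_sum (A := f.support ∪ g.support ∪ (f + g).support) (by intro x hx; simp [hx]) F,
    Bf_eq_sum (A := f.support ∪ g.support ∪ (f + g).support) (by intro x hx; simp [hx]) F,
    ← Finset.sum_add_distrib]
  exact Finset.sum_congr rfl fun a _ => by rw [MvPolynomial.coeff_add, add_mul]

lemma Bf_sub (f g : MvPolynomial (Fin m) K) (F : DP m K) :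
    Bf (f - g) F = Bf f F - Bf g F := by
  rw [Bf_eq_sum (A := f.support ∪ g.support ∪ (f - g).support) (by intro x hx; simp [hx]) F,
    Bf_eq_sum (A := f.support ∪ g.support ∪ (f - g).support) (by intro x hx; simp [hx]) F,
    Bf_eq_sum (A := f.support ∪ g.support ∪ (f - g).support) (by intro x hx; simp [hx]) F,
    ← Finset.sum_sub_distrib]
  exact Finset.sum_congr rfl fun a _ => by rw [MvPolynomial.coeff_sub, sub_mul]

lemma isDPSubmodule_DPspan (S : Set (DP m K)) : IsDPSubmodule (DPspan S) :=
  ⟨fun W hW => hW.1.1,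
    fun F G hF hG W hW => hW.1.2.1 F G (hF W hW) (hG W hW),
    fun c F hF W hW => hW.1.2.2.1 c F (hF W hW),
    fun f F hF W hW => hW.1.2.2.2 f F (hF W hW)⟩

lemma DPspan_subset {S W : Set (DP m K)} (hW : IsDPSubmodule W) (hS : S ⊆ W) :
    DPspan S ⊆ W := fun _ hx => hx W ⟨hW, hS⟩

lemma IsDPSubmodule.inter {W₁ W₂ : Set (DP m K)} (h1 : IsDPSubmodule W₁)
    (h2 : IsDPSubmodule W₂) : IsDPSubmodule (W₁ ∩ W₂) :=
  ⟨⟨h1.1, h2.1⟩, fun F G hF hG => ⟨h1.2.1 F G hF.1 hG.1, h2.2.1 F G hF.2 hG.2⟩,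
   fun c F hF => ⟨h1.2.2.1 c F hF.1, h2.2.2.1 c F hF.2⟩,
   fun f F hF => ⟨h1.2.2.2 f F hF.1, h2.2.2.2 f F hF.2⟩⟩

lemma mem_DPann_iff {W : Set (DP m K)} (hW : IsDPSubmodule W)
    (f : MvPolynomial (Fin m) K) : f ∈ DPann W ↔ ∀ F ∈ W, Bf f F = 0 := by
  constructor
  · intro hf F hF
    rw [Bf_eq_contract_zero, hf F hF]
    rfl
  · intro h F hF
    ext c
    have hFc : contract (monomial c 1) F ∈ W := hW.2.2.2 (monomial c 1) F hF
    rw [contract_apply_eq_Bf, h _ hFc]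
    rfl

lemma support_mem_of_mem_DPspan (S : Finset (DP m K)) (Δ : Finset (Fin m →₀ ℕ))
    (hdown : ∀ b ∈ Δ, ∀ b', b' ≤ b → b' ∈ Δ)
    (hS : ∀ s ∈ S, ∀ b ∈ s.support, b ∈ Δ)
    {F : DP m K} (hF : F ∈ DPspan (↑S : Set (DP m K))) :
    ∀ b ∈ F.support, b ∈ Δ := by
  have hsub : IsDPSubmodule {G : DP m K | ∀ b ∈ G.support, b ∈ Δ} := by
    refine ⟨by simp, ?_, ?_, ?_⟩
    · intro F G hF hG b hb
      rcases Finset.mem_union.mp (Finsupp.support_add hb) with h | h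
      · exact hF b h
      · exact hG b h
    · intro c F hF b hb
      exact hF b (Finsupp.support_smul hb)
    · intro f G hG b hb
      by_contra hbΔ
      have hb' : contract f G b ≠ 0 := Finsupp.mem_support_iff.mp hb
      rw [contract_apply f G (subset_refl _) b] at hb'
      obtain ⟨a, -, ha⟩ := Finset.exists_ne_zero_of_sum_ne_zero hb'
      have hGa : G (a + b) ≠ 0 := fun h => ha (by rw [h, mul_zero])
      have := hG (a + b) (Finsupp.mem_support_iff.mpr hGa)
      exact hbΔ (hdown _ this b le_add_self)
  exact DPspan_subset hsub (fun s hs b hb => hS s hs b hb) hF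

/-- Let `W₁, W₂` be finitely generated `R`-submodules of the divided
power module `𝒟`.  Then `ann_R(W₁ ∩ W₂) = ann_R(W₁) + ann_R(W₂)`. -/
theorem ann_inter_eq_sum_ann {m : ℕ} {K : Type*} [Field K]
    (S₁ S₂ : Finset (DP m K)) (W₁ W₂ : Set (DP m K))
    (h₁ : W₁ = DPspan (↑S₁ : Set (DP m K)))
    (h₂ : W₂ = DPspan (↑S₂ : Set (DP m K))) :
    DPann (W₁ ∩ W₂) = {f | ∃ g ∈ DPann W₁, ∃ h ∈ DPann W₂, f = g + h} := by
  have hW₁ : IsDPSubmodule W₁ := by rw [h₁]; exact isDPSubmodule_DPspan _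
  have hW₂ : IsDPSubmodule W₂ := by rw [h₂]; exact isDPSubmodule_DPspan _
  -- the finite downward-closed set of exponents
  set Δ : Finset (Fin m →₀ ℕ) :=
    (S₁ ∪ S₂).biUnion (fun s => s.support.biUnion fun a => Finset.Iic a) with hΔ
  have hdown : ∀ b ∈ Δ, ∀ b', b' ≤ b → b' ∈ Δ := by
    intro b hb b' hb'
    rw [hΔ, Finset.mem_biUnion] at hb ⊢
    obtain ⟨s, hs, hbs⟩ := hb
    refine ⟨s, hs, ?_⟩
    rw [Finset.mem_biUnion] at hbs ⊢
    obtain ⟨a, ha, hba⟩ := hbs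
    exact ⟨a, ha, Finset.mem_Iic.mpr (le_trans hb' (Finset.mem_Iic.mp hba))⟩
  have hgen : ∀ s ∈ S₁ ∪ S₂, ∀ b ∈ s.support, b ∈ Δ := by
    intro s hs b hb
    rw [hΔ, Finset.mem_biUnion]
    exact ⟨s, hs, Finset.mem_biUnion.mpr ⟨b, hb, Finset.mem_Iic.mpr le_rfl⟩⟩
  have hsupp₁ : ∀ F ∈ W₁, ∀ b ∈ F.support, b ∈ Δ := by
    intro F hF
    exact support_mem_of_mem_DPspan S₁ Δ hdown
      (fun s hs => hgen s (Finset.mem_union_left _ hs)) (h₁ ▸ hF)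
  have hsupp₂ : ∀ F ∈ W₂, ∀ b ∈ F.support, b ∈ Δ := by
    intro F hF
    exact support_mem_of_mem_DPspan S₂ Δ hdown
      (fun s hs => hgen s (Finset.mem_union_right _ hs)) (h₂ ▸ hF)
  -- the K-submodules
  let U₁ : Submodule K (DP m K) :=
    { carrier := W₁
      add_mem' := fun ha hb => hW₁.2.1 _ _ ha hb
      zero_mem' := hW₁.1
      smul_mem' := fun c x hx => hW₁.2.2.1 c x hx }
  let U₂ : Submodule K (DP m K) :=
    { carrier := W₂
      add_mem' := fun ha hb => hW₂.2.1 _ _ ha hb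
      zero_mem' := hW₂.1
      smul_mem' := fun c x hx => hW₂.2.2.1 c x hx }
  -- lifting functionals to polynomials supported on Δ
  have hcoeff : ∀ (ψ : Module.Dual K (DP m K)) (b : Fin m →₀ ℕ),
      coeff b (∑ a ∈ Δ, monomial a (ψ (Finsupp.single a 1)))
        = if b ∈ Δ then ψ (Finsupp.single b 1) else 0 := by
    intro ψ b
    rw [MvPolynomial.coeff_sum]
    simp only [MvPolynomial.coeff_monomial]
    exact Finset.sum_ite_eq' Δ b _
  have hBg : ∀ (ψ : Module.Dual K (DP m K)) (G : DP m K), (∀ b ∈ G.support, b ∈ Δ) →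
      Bf (∑ a ∈ Δ, monomial a (ψ (Finsupp.single a 1))) G = ψ G := by
    intro ψ G hG
    set g : MvPolynomial (Fin m) K := ∑ a ∈ Δ, monomial a (ψ (Finsupp.single a 1)) with hgdef
    have hsupp : g.support ⊆ Δ := by
      intro b hb
      by_contra h
      exact (MvPolynomial.mem_support_iff.mp hb) (by rw [hcoeff ψ b, if_neg h])
    rw [Bf_eq_sum hsupp G]
    have hterm : ∀ a ∈ Δ, coeff a g * G a = ψ (Finsupp.single a (G a)) := by
      intro a ha
      rw [hcoeff ψ a, if_pos ha]
      have hsingle : Finsupp.single a (G a) = G a • Finsupp.single a (1 : K) := by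
        rw [Finsupp.smul_single', mul_one]
      rw [hsingle, map_smul, smul_eq_mul, mul_comm]
    rw [Finset.sum_congr rfl hterm, ← map_sum]
    congr 1
    conv_rhs => rw [← Finsupp.sum_single G, Finsupp.sum]
    symm
    apply Finset.sum_subset (fun b hb => hG b hb)
    intro a _ ha
    rw [Finsupp.notMem_support_iff.mp ha, Finsupp.single_zero]
  ext f
  constructor
  · -- hard direction
    intro hf
    -- the dual functional attached to f
    set φ : Module.Dual K (DP m K) :=
      ∑ a ∈ f.support, coeff a f • Finsupp.lapply a with hφdef
    have hφ : ∀ F : DP m K, φ F = Bf f F := by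
      intro F
      rw [hφdef, Bf]
      simp [LinearMap.sum_apply, Finsupp.lapply_apply, smul_eq_mul]
    have hmem : φ ∈ (U₁ ⊓ U₂).dualAnnihilator := by
      rw [Submodule.mem_dualAnnihilator]
      intro w hw
      rw [hφ]
      exact (mem_DPann_iff (hW₁.inter hW₂) f).mp hf w
        ⟨(Submodule.mem_inf.mp hw).1, (Submodule.mem_inf.mp hw).2⟩
    rw [Subspace.dualAnnihilator_inf_eq] at hmem
    obtain ⟨ψ₁, hψ₁, ψ₂, hψ₂, hsum⟩ := Submodule.mem_sup.mp hmem
    rw [Submodule.mem_dualAnnihilator] at hψ₁ hψ₂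
    set g : MvPolynomial (Fin m) K := ∑ a ∈ Δ, monomial a (ψ₁ (Finsupp.single a 1)) with hgdef
    refine ⟨g, ?_, f - g, ?_, by ring⟩
    · -- g annihilates W₁
      refine (mem_DPann_iff hW₁ g).mpr fun F hF => ?_
      rw [hBg ψ₁ F (hsupp₁ F hF)]
      exact hψ₁ F hF
    · -- f - g annihilates W₂
      intro F hF
      ext c
      have hFc : contract (monomial c 1) F ∈ W₂ := hW₂.2.2.2 (monomial c 1) F hF
      rw [contract_apply_eq_Bf, Bf_sub, hBg ψ₁ _ (hsupp₂ _ hFc), ← hφ, ← hsum]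
      simp [hψ₂ _ hFc]
  · -- easy direction
    rintro ⟨g, hg, h, hh, rfl⟩
    intro F hF
    ext c
    rw [contract_apply_eq_Bf, Bf_add]
    have hFc₁ : contract (monomial c 1) F ∈ W₁ := hW₁.2.2.2 (monomial c 1) F hF.1
    have hFc₂ : contract (monomial c 1) F ∈ W₂ := hW₂.2.2.2 (monomial c 1) F hF.2
    rw [Bf_eq_contract_zero g, hg _ hFc₁, Bf_eq_contract_zero h, hh _ hFc₂]
    simp
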